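/- Let G ⊆ ℝ be a divisible additive subgroup, let 𝒫 be a nonempty finite collection of nonempty integral G-affine polyhedra in ℝ^n, and let Δ be an integral pointed fan that is a compactifying fan for 𝒫. Then there exists an integral G-affine pointed polyhedron P with ⋃_{P'∈𝒫} P' ⊆ P and ρ(P) ∈ Δ if and only if there exists a cone σ ∈ Δ such that for every P' ∈ 𝒫, the recession cone ρ(P') is a face of σ. -/

import Mathlib

/-!
If `P ⊇ ⋃ 𝒞` has recession cone `σ ∈ Δ`, then each `ρ(P')` lies in `σ`, is a union of cones
of `Δ` (hence of faces of `σ`) and is closed under addition; such a finite union of faces is a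
single face. Conversely, if every `ρ(P')` is a face of `σ = {u_i ≤ 0}`, Farkas' lemma over `ℚ`
bounds `u_i` on `P'` by a nonnegative rational combination of the right-hand sides defining
`P'`, which lies in `G` by divisibility. Taking `a_i ∈ G` above all these bounds, the polyhedron
`{u_i ≤ a_i}` contains `⋃ 𝒞` and has recession cone `σ`.
-/

open Set

/-- A polyhedron: a finite intersection of closed halfspaces `{v : ⟨uᵢ, v⟩ ≤ cᵢ}`. -/
def IsPolyhedron {V : Type*} [AddCommGroup V] [Module ℝ V] (P : Set V) : Prop :=
  ∃ (m : ℕ) (u : Fin m → (V →ₗ[ℝ] ℝ)) (c : Fin m → ℝ),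
    P = ⋂ i, {v : V | u i v ≤ c i}

/-- The recession cone `ρ(P) = {w : v + w ∈ P for all v ∈ P}`. -/
def recCone {V : Type*} [AddCommGroup V] [Module ℝ V] (P : Set V) : Set V :=
  {w : V | ∀ v ∈ P, v + w ∈ P}

/-- A polyhedral cone: a finite intersection of halfspaces `{v : ⟨uᵢ, v⟩ ≤ 0}`. -/
def IsPolyCone {V : Type*} [AddCommGroup V] [Module ℝ V] (σ : Set V) : Prop :=
  ∃ (m : ℕ) (u : Fin m → (V →ₗ[ℝ] ℝ)), σ = ⋂ i, {v : V | u i v ≤ 0}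

/-- A set is pointed if it contains no nonzero linear subspace. -/
def IsPointedSet {V : Type*} [AddCommGroup V] [Module ℝ V] (σ : Set V) : Prop :=
  ∀ W : Submodule ℝ V, (W : Set V) ⊆ σ → W = ⊥

/-- `F` is a face of the polyhedral cone `σ`. -/
def IsFaceOfCone {V : Type*} [AddCommGroup V] [Module ℝ V] (σ F : Set V) : Prop :=
  ∃ u : V →ₗ[ℝ] ℝ, (∀ x ∈ σ, u x ≤ 0) ∧ F = {x ∈ σ | u x = 0}

/-- A fan: a finite collection of polyhedral cones, closed under taking faces, such that
the intersection of any two cones is a face of each. -/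
def IsFan {V : Type*} [AddCommGroup V] [Module ℝ V] (Δ : Set (Set V)) : Prop :=
  Δ.Finite ∧ (∀ σ ∈ Δ, IsPolyCone σ) ∧
    (∀ σ ∈ Δ, ∀ F : Set V, IsFaceOfCone σ F → F ∈ Δ) ∧
    (∀ σ ∈ Δ, ∀ τ ∈ Δ, IsFaceOfCone σ (σ ∩ τ) ∧ IsFaceOfCone τ (σ ∩ τ))

/-- A pointed fan: a fan all of whose cones are pointed. -/
def IsPointedFan {V : Type*} [AddCommGroup V] [Module ℝ V] (Δ : Set (Set V)) : Prop :=
  IsFan Δ ∧ ∀ σ ∈ Δ, IsPointedSet σ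

/-- An integral `G`-affine polyhedron in `ℝⁿ`: defined by `⟨uᵢ, v⟩ ≤ aᵢ` with `uᵢ ∈ ℤⁿ`
and `aᵢ ∈ G`. -/
def IsIntegralGPolyhedron {n : ℕ} (G : AddSubgroup ℝ) (P : Set (Fin n → ℝ)) : Prop :=
  ∃ (m : ℕ) (u : Fin m → Fin n → ℤ) (a : Fin m → ℝ),
    (∀ i, a i ∈ G) ∧ P = ⋂ i, {v : Fin n → ℝ | ∑ j, (u i j : ℝ) * v j ≤ a i}

/-- An integral polyhedral cone in `ℝⁿ`: defined by `⟨uᵢ, v⟩ ≤ 0` with `uᵢ ∈ ℤⁿ`. -/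
def IsIntegralCone {n : ℕ} (σ : Set (Fin n → ℝ)) : Prop :=
  ∃ (m : ℕ) (u : Fin m → Fin n → ℤ),
    σ = ⋂ i, {v : Fin n → ℝ | ∑ j, (u i j : ℝ) * v j ≤ 0}

/-- `Δ` is a compactifying fan for `𝒞`: each recession cone `ρ(P)`, `P ∈ 𝒞`, is a union
of cones of `Δ`. -/
def IsCompactifyingFan {V : Type*} [AddCommGroup V] [Module ℝ V]
    (Δ 𝒞 : Set (Set V)) : Prop :=
  ∀ P ∈ 𝒞, ∃ S ⊆ Δ, recCone P = ⋃₀ S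

/-- `𝒞'` is a refinement of `𝒞`: a finite collection of polyhedra, each contained in a member
of `𝒞`, such that each member of `𝒞` is the union of the members of `𝒞'` it contains. -/
def IsRefinement {V : Type*} (𝒞 𝒞' : Set (Set V)) : Prop :=
  𝒞'.Finite ∧ (∀ Q ∈ 𝒞', ∃ P ∈ 𝒞, Q ⊆ P) ∧ ∀ P ∈ 𝒞, P = ⋃₀ {Q ∈ 𝒞' | Q ⊆ P}

section RecessionCone

variable {V : Type*} [AddCommGroup V] [Module ℝ V]

lemma zero_mem_recCone (P : Set V) : (0 : V) ∈ recCone P := fun v hv => by rwa [add_zero]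

lemma add_mem_recCone {P : Set V} {a b : V} (ha : a ∈ recCone P) (hb : b ∈ recCone P) :
    a + b ∈ recCone P := fun v hv => by
  rw [← add_assoc]
  exact hb _ (ha v hv)

lemma add_nsmul_mem_of_mem_recCone {P : Set V} {v w : V} (hw : w ∈ recCone P) (hv : v ∈ P)
    (k : ℕ) : v + k • w ∈ P := by
  induction k with
  | zero => simpa using hv
  | succ k ih =>
    rw [succ_nsmul, ← add_assoc]
    exact hw _ ih

lemma recCone_subset_iInter_halfspace {ι : Sort*} {f : ι → V →ₗ[ℝ] ℝ} {c : ι → ℝ} {P : Set V}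
    (hne : P.Nonempty) (hsub : P ⊆ ⋂ i, {v | f i v ≤ c i}) :
    recCone P ⊆ ⋂ i, {v | f i v ≤ 0} := by
  obtain ⟨v, hv⟩ := hne
  refine fun w hw => mem_iInter.2 fun i => ?_
  by_contra! hpos
  rw [mem_ofPred, not_le] at hpos
  obtain ⟨k, hk⟩ := exists_nat_gt ((c i - f i v) / f i w)
  have hle : f i (v + k • w) ≤ c i :=
    mem_iInter.1 (hsub (add_nsmul_mem_of_mem_recCone hw hv k)) i
  rw [map_add, map_nsmul, nsmul_eq_mul] at hle
  rw [div_lt_iff₀ hpos] at hk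
  linarith

lemma recCone_iInter_halfspace {ι : Sort*} (f : ι → V →ₗ[ℝ] ℝ) (c : ι → ℝ)
    (hne : (⋂ i, {v | f i v ≤ c i}).Nonempty) :
    recCone (⋂ i, {v | f i v ≤ c i}) = ⋂ i, {v | f i v ≤ 0} := by
  refine (recCone_subset_iInter_halfspace hne Subset.rfl).antisymm fun w hw v hv => ?_
  simp only [mem_iInter, mem_ofPred, map_add] at hw hv ⊢
  exact fun i => by linarith [hw i, hv i]

lemma IsPolyhedron.recCone_subset_of_subset {P P' : Set V} (hP : IsPolyhedron P)
    (hne : P'.Nonempty) (h : P' ⊆ P) : recCone P' ⊆ recCone P := by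
  obtain ⟨m, f, c, rfl⟩ := hP
  rw [recCone_iInter_halfspace f c (hne.mono h)]
  exact recCone_subset_iInter_halfspace hne h

end RecessionCone

section Faces

variable {V : Type*} [AddCommGroup V] [Module ℝ V]

lemma IsFaceOfCone.subset {σ F : Set V} (h : IsFaceOfCone σ F) : F ⊆ σ := by
  obtain ⟨u, -, rfl⟩ := h
  exact sep_subset _ _

lemma IsFaceOfCone.mem_of_sum_mem {ι : Type*} {σ F : Set V} (h : IsFaceOfCone σ F)
    {s : Finset ι} {y : ι → V} (hy : ∀ i ∈ s, y i ∈ σ) (hsum : ∑ i ∈ s, y i ∈ F) :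
    ∀ i ∈ s, y i ∈ F := by
  obtain ⟨u, hu, rfl⟩ := h
  have hzero : ∀ i ∈ s, u (y i) = 0 := by
    refine (Finset.sum_eq_zero_iff_of_nonpos fun i hi => hu _ (hy i hi)).1 ?_
    rw [← map_sum]
    exact hsum.2
  exact fun i hi => ⟨hy i hi, hzero i hi⟩

/-- Summing, over all pairs `τ ⊄ s` in `S`, a point of `τ` outside `s` gives a point of
`⋃₀ S`; the face containing it must then contain every summand, hence every `τ ∈ S`. -/
lemma exists_eq_sUnion_of_isFaceOfCone {σ : Set V} {S : Set (Set V)} (hS : S.Finite)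
    (hface : ∀ τ ∈ S, IsFaceOfCone σ τ) (h0 : (0 : V) ∈ ⋃₀ S)
    (hadd : ∀ a ∈ ⋃₀ S, ∀ b ∈ ⋃₀ S, a + b ∈ ⋃₀ S) : ∃ τ₀ ∈ S, ⋃₀ S = τ₀ := by
  classical
  set D := (hS.toFinset ×ˢ hS.toFinset).filter fun p => ¬p.1 ⊆ p.2
  have hD : ∀ p ∈ D, p.1 ∈ S ∧ p.2 ∈ S ∧ ¬p.1 ⊆ p.2 := fun p hp => by
    simpa [D, and_assoc] using hp
  have hwit : ∀ p ∈ D, ∃ y ∈ p.1, y ∉ p.2 := fun p hp => not_subset.1 (hD p hp).2.2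
  choose! y hy hys using hwit
  obtain ⟨τ₀, hτ₀, hsum⟩ : ∑ p ∈ D, y p ∈ ⋃₀ S :=
    Finset.sum_induction _ (· ∈ ⋃₀ S) (fun a b ha hb => hadd a ha b hb) h0
      fun p hp => ⟨p.1, (hD p hp).1, hy p hp⟩
  have hmem := (hface τ₀ hτ₀).mem_of_sum_mem
    (fun p hp => (hface p.1 (hD p hp).1).subset (hy p hp)) hsum
  refine ⟨τ₀, hτ₀, (sUnion_subset fun τ hτ => ?_).antisymm (subset_sUnion_of_mem hτ₀)⟩
  by_contra h
  have hp : (τ, τ₀) ∈ D := by simp [D, hτ, hτ₀, h]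
  exact hys _ hp (hmem _ hp)

lemma IsFan.isFaceOfCone_of_subset {Δ : Set (Set V)} (hΔ : IsFan Δ) {σ τ : Set V}
    (hσ : σ ∈ Δ) (hτ : τ ∈ Δ) (h : τ ⊆ σ) : IsFaceOfCone σ τ := by
  simpa [inter_eq_right.2 h] using (hΔ.2.2.2 σ hσ τ hτ).1

lemma IsFan.isFaceOfCone_of_eq_sUnion {Δ S : Set (Set V)} (hΔ : IsFan Δ) {σ C : Set V}
    (hσ : σ ∈ Δ) (hSΔ : S ⊆ Δ) (hC : C = ⋃₀ S) (hCσ : C ⊆ σ) (h0 : (0 : V) ∈ C)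
    (hadd : ∀ a ∈ C, ∀ b ∈ C, a + b ∈ C) : IsFaceOfCone σ C := by
  subst hC
  have hτσ : ∀ τ ∈ S, τ ⊆ σ := fun τ hτ => (subset_sUnion_of_mem hτ).trans hCσ
  obtain ⟨τ₀, hτ₀, heq⟩ := exists_eq_sUnion_of_isFaceOfCone (hΔ.1.subset hSΔ)
    (fun τ hτ => hΔ.isFaceOfCone_of_subset hσ (hSΔ hτ) (hτσ τ hτ)) h0 hadd
  rw [heq]
  exact hΔ.isFaceOfCone_of_subset hσ (hSΔ hτ₀) (hτσ τ₀ hτ₀)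

end Faces

section Farkas

variable {F V : Type*} [Field F] [AddCommGroup V] [Module F V]

def projKer (g : V →ₗ[F] F) (x₀ : V) : V →ₗ[F] V :=
  g x₀ • LinearMap.id - g.smulRight x₀

lemma apply_projKer (h g : V →ₗ[F] F) (x₀ x : V) :
    h (projKer g x₀ x) = g x₀ * h x - g x * h x₀ := by
  simp [projKer]

variable [LinearOrder F] [IsStrictOrderedRing F]

/-- Farkas' lemma over an ordered field, by Fourier–Motzkin elimination of the last functional. -/
theorem exists_nonneg_eq_sum_smul_of_forall_nonpos :
    ∀ {m : ℕ} (g : Fin m → V →ₗ[F] F) (f : V →ₗ[F] F),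
      (∀ x, (∀ i, g i x ≤ 0) → f x ≤ 0) → ∃ c : Fin m → F, (∀ i, 0 ≤ c i) ∧ f = ∑ i, c i • g i
  | 0, g, f, h => by
    refine ⟨0, fun _ => le_rfl, LinearMap.ext fun x => ?_⟩
    have := h (-x) finZeroElim
    simp only [map_neg, neg_nonpos] at this
    simpa using (h x finZeroElim).antisymm this
  | m + 1, g, f, h => by
    by_cases hred : ∀ x, (∀ i : Fin m, g i.castSucc x ≤ 0) → f x ≤ 0
    · obtain ⟨c, hc, rfl⟩ := exists_nonneg_eq_sum_smul_of_forall_nonpos _ f hred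
      exact ⟨Fin.snoc c 0, Fin.lastCases (by simp) (by simpa using hc),
        by simp [Fin.sum_univ_castSucc]⟩
    push Not at hred
    obtain ⟨x₀, hx₀, hfx₀⟩ := hred
    have hα : 0 < g (Fin.last m) x₀ := by
      by_contra! hle
      exact hfx₀.not_ge (h x₀ (Fin.lastCases hle hx₀))
    set π := projKer (g (Fin.last m)) x₀
    obtain ⟨c, hc, hcomb⟩ := exists_nonneg_eq_sum_smul_of_forall_nonpos
      (fun i => g i.castSucc ∘ₗ π) (f ∘ₗ π) fun x hx =>
        h (π x) (Fin.lastCases (by simp [π, apply_projKer, mul_comm]) hx)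
    set s := ∑ i, c i * g i.castSucc x₀
    have hs : s ≤ 0 := Finset.sum_nonpos fun i _ => mul_nonpos_of_nonneg_of_nonpos (hc i) (hx₀ i)
    refine ⟨Fin.snoc c ((f x₀ - s) / g (Fin.last m) x₀),
      Fin.lastCases (by simpa using div_nonneg (by linarith) hα.le) (by simpa using hc), ?_⟩
    ext x
    have hx := LinearMap.congr_fun hcomb x
    simp only [LinearMap.comp_apply, π, apply_projKer, LinearMap.sum_apply,
      LinearMap.smul_apply, smul_eq_mul, mul_sub, Finset.sum_sub_distrib, mul_left_comm (c _),
      ← Finset.mul_sum] at hx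
    simp only [Fin.sum_univ_castSucc, Fin.snoc_castSucc, Fin.snoc_last, LinearMap.add_apply,
      LinearMap.sum_apply, LinearMap.smul_apply, smul_eq_mul]
    field_simp
    linear_combination hx

end Farkas

section IntegralPolyhedra

variable {n : ℕ}

lemma rat_mul_mem_of_divisible {G : AddSubgroup ℝ}
    (hGdiv : ∀ g ∈ G, ∀ k : ℕ, 0 < k → ∃ g' ∈ G, (k : ℝ) * g' = g) (q : ℚ) {g : ℝ}
    (hg : g ∈ G) : (q : ℝ) * g ∈ G := by
  obtain ⟨g', hg', rfl⟩ := hGdiv g hg q.den q.pos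
  have hq : (q : ℝ) * q.den = q.num := by exact_mod_cast q.mul_den_eq_num
  rw [← mul_assoc, hq, ← zsmul_eq_mul]
  exact zsmul_mem hg' _

lemma AddSubgroup.exists_nonneg_mem_forall_le {α : Type*} (G : AddSubgroup ℝ) {s : Set α}
    (hs : s.Finite) (f : α → ℝ) (hf : ∀ x ∈ s, f x ∈ G) :
    ∃ a ∈ G, 0 ≤ a ∧ ∀ x ∈ s, f x ≤ a := by
  refine ⟨∑ x ∈ hs.toFinset, |f x|, sum_mem fun x hx => ?_,
    Finset.sum_nonneg fun _ _ => abs_nonneg _, fun x hx => ?_⟩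
  · have hfx := hf x (hs.mem_toFinset.1 hx)
    rcases abs_choice (f x) with h | h <;> rw [h]
    exacts [hfx, neg_mem hfx]
  · exact (le_abs_self _).trans
      (Finset.single_le_sum (f := fun x => |f x|) (fun _ _ => abs_nonneg _)
        (hs.mem_toFinset.2 hx))

lemma recCone_iInter_intHalfspace {m : ℕ} (u : Fin m → Fin n → ℤ) (a : Fin m → ℝ)
    (hne : (⋂ i, {v : Fin n → ℝ | ∑ j, (u i j : ℝ) * v j ≤ a i}).Nonempty) :
    recCone (⋂ i, {v : Fin n → ℝ | ∑ j, (u i j : ℝ) * v j ≤ a i}) =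
      ⋂ i, {v : Fin n → ℝ | ∑ j, (u i j : ℝ) * v j ≤ 0} :=
  recCone_iInter_halfspace (fun i => dotProductBilin ℝ ℝ fun j => (u i j : ℝ)) a hne

lemma IsIntegralGPolyhedron.isPolyhedron {G : AddSubgroup ℝ} {P : Set (Fin n → ℝ)}
    (hP : IsIntegralGPolyhedron G P) : IsPolyhedron P := by
  obtain ⟨m, u, a, -, rfl⟩ := hP
  exact ⟨m, fun i => dotProductBilin ℝ ℝ fun j => (u i j : ℝ), a, rfl⟩

/-- Farkas' lemma over `ℚ` writes `u` as a nonnegative rational combination of the `w k`,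
so the same combination of the `b k` bounds `u` and lies in `G`. -/
lemma exists_mem_forall_le_of_forall_nonpos {G : AddSubgroup ℝ}
    (hGdiv : ∀ g ∈ G, ∀ k : ℕ, 0 < k → ∃ g' ∈ G, (k : ℝ) * g' = g) {m : ℕ}
    (w : Fin m → Fin n → ℤ) (b : Fin m → ℝ) (hb : ∀ k, b k ∈ G) (u : Fin n → ℤ)
    (hu : ∀ d : Fin n → ℝ, (∀ k, ∑ j, (w k j : ℝ) * d j ≤ 0) → ∑ j, (u j : ℝ) * d j ≤ 0) :
    ∃ a ∈ G, ∀ v ∈ ⋂ k, {v : Fin n → ℝ | ∑ j, (w k j : ℝ) * v j ≤ b k},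
      ∑ j, (u j : ℝ) * v j ≤ a := by
  obtain ⟨c, hc, hcomb⟩ := exists_nonneg_eq_sum_smul_of_forall_nonpos
    (fun k => dotProductBilin ℚ ℚ fun j => (w k j : ℚ)) (dotProductBilin ℚ ℚ fun j => (u j : ℚ))
    fun x hx => by
      have hxℝ := hu (fun j => (x j : ℝ)) fun k => by
        simpa [dotProduct] using (Rat.cast_nonpos (K := ℝ)).2 (hx k)
      exact_mod_cast hxℝ
  have hcoord : ∀ j, (u j : ℝ) = ∑ k, (c k : ℝ) * w k j := fun j => by
    have hj := LinearMap.congr_fun hcomb (Pi.single j 1)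
    simp only [dotProductBilin_apply_apply, dotProduct_single_one, LinearMap.sum_apply,
      LinearMap.smul_apply, smul_eq_mul] at hj
    exact_mod_cast hj
  refine ⟨∑ k, (c k : ℝ) * b k, sum_mem fun k _ => rat_mul_mem_of_divisible hGdiv _ (hb k),
    fun v hv => ?_⟩
  calc ∑ j, (u j : ℝ) * v j = ∑ k, (c k : ℝ) * ∑ j, (w k j : ℝ) * v j := by
        simp only [hcoord, Finset.sum_mul, Finset.mul_sum, mul_assoc]
        exact Finset.sum_comm
    _ ≤ ∑ k, (c k : ℝ) * b k := Finset.sum_le_sum fun k _ =>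
        mul_le_mul_of_nonneg_left (mem_iInter.1 hv k) (by exact_mod_cast hc k)

lemma IsIntegralGPolyhedron.exists_mem_forall_le {G : AddSubgroup ℝ}
    (hGdiv : ∀ g ∈ G, ∀ k : ℕ, 0 < k → ∃ g' ∈ G, (k : ℝ) * g' = g) {P : Set (Fin n → ℝ)}
    (hP : IsIntegralGPolyhedron G P) (hne : P.Nonempty) (u : Fin n → ℤ)
    (hu : ∀ d ∈ recCone P, ∑ j, (u j : ℝ) * d j ≤ 0) :
    ∃ a ∈ G, ∀ v ∈ P, ∑ j, (u j : ℝ) * v j ≤ a := by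
  obtain ⟨m, w, b, hb, rfl⟩ := hP
  refine exists_mem_forall_le_of_forall_nonpos hGdiv w b hb u fun d hd => hu d ?_
  rw [recCone_iInter_intHalfspace w b hne]
  exact mem_iInter.2 hd

end IntegralPolyhedra

theorem exists_enclosing_polyhedron_iff_general {n : ℕ} (G : AddSubgroup ℝ)
    (hGdiv : ∀ g ∈ G, ∀ k : ℕ, 0 < k → ∃ g' ∈ G, (k : ℝ) * g' = g)
    (𝒞 : Set (Set (Fin n → ℝ))) (h𝒞fin : 𝒞.Finite)
    (h𝒞 : ∀ P ∈ 𝒞, IsIntegralGPolyhedron G P ∧ P.Nonempty)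
    (Δ : Set (Set (Fin n → ℝ))) (hΔ : IsPointedFan Δ)
    (hΔint : ∀ σ ∈ Δ, IsIntegralCone σ) (hcpt : IsCompactifyingFan Δ 𝒞) :
    (∃ P : Set (Fin n → ℝ), IsIntegralGPolyhedron G P ∧ IsPointedSet (recCone P) ∧
        ⋃₀ 𝒞 ⊆ P ∧ recCone P ∈ Δ) ↔
      ∃ σ ∈ Δ, ∀ P' ∈ 𝒞, IsFaceOfCone σ (recCone P') := by
  constructor
  · rintro ⟨P, hP, -, hsub, hPΔ⟩
    refine ⟨recCone P, hPΔ, fun P' hP' => ?_⟩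
    obtain ⟨S, hSΔ, hS⟩ := hcpt P' hP'
    exact hΔ.1.isFaceOfCone_of_eq_sUnion hPΔ hSΔ hS
      (hP.isPolyhedron.recCone_subset_of_subset (h𝒞 P' hP').2
        ((subset_sUnion_of_mem hP').trans hsub))
      (zero_mem_recCone P') fun _ ha _ hb => add_mem_recCone ha hb
  · rintro ⟨σ, hσ, hface⟩
    obtain ⟨m, u, rfl⟩ := hΔint σ hσ
    -- `0 ≤ a` puts `0` in the enclosing polyhedron, which makes its recession cone `σ`.
    have hbound : ∀ i, ∃ a ∈ G, 0 ≤ a ∧ ∀ P' ∈ 𝒞, ∀ v ∈ P', ∑ j, (u i j : ℝ) * v j ≤ a := by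
      intro i
      have hP' : ∀ P' ∈ 𝒞, ∃ a ∈ G, ∀ v ∈ P', ∑ j, (u i j : ℝ) * v j ≤ a := fun P' hP' =>
        (h𝒞 P' hP').1.exists_mem_forall_le hGdiv (h𝒞 P' hP').2 (u i) fun d hd =>
          mem_iInter.1 ((hface P' hP').subset hd) i
      choose! A hAG hA using hP'
      obtain ⟨a, haG, ha0, hAa⟩ := G.exists_nonneg_mem_forall_le h𝒞fin A hAG
      exact ⟨a, haG, ha0, fun P' hP' v hv => (hA P' hP' v hv).trans (hAa P' hP')⟩
    choose a haG ha0 hab using hbound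
    have hρ := recCone_iInter_intHalfspace u a ⟨0, mem_iInter.2 fun i => by simpa using ha0 i⟩
    refine ⟨_, ⟨m, u, a, haG, rfl⟩, hρ ▸ hΔ.2 _ hσ, ?_, hρ ▸ hσ⟩
    rintro v ⟨P', hP', hv⟩
    exact mem_iInter.2 fun i => hab i P' hP' v hv

/-- Let `G ⊆ ℝ` be a divisible subgroup, `𝒞` a nonempty finite collection of nonempty
integral `G`-affine polyhedra in `ℝⁿ`, and `Δ` an integral pointed compactifying fan for
`𝒞`.  Then there exists an integral `G`-affine pointed polyhedron `P` with `|𝒞| ⊆ P` and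
`ρ(P) ∈ Δ` if and only if there is a cone `σ ∈ Δ` such that `ρ(P')` is a face of `σ` for
every `P' ∈ 𝒞`. -/
theorem exists_enclosing_polyhedron_iff {n : ℕ} (G : AddSubgroup ℝ)
    (hGdiv : ∀ g ∈ G, ∀ k : ℕ, 0 < k → ∃ g' ∈ G, (k : ℝ) * g' = g)
    (𝒞 : Set (Set (Fin n → ℝ))) (h𝒞fin : 𝒞.Finite) (h𝒞ne : 𝒞.Nonempty)
    (h𝒞 : ∀ P ∈ 𝒞, IsIntegralGPolyhedron G P ∧ P.Nonempty)
    (Δ : Set (Set (Fin n → ℝ))) (hΔ : IsPointedFan Δ)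
    (hΔint : ∀ σ ∈ Δ, IsIntegralCone σ) (hcpt : IsCompactifyingFan Δ 𝒞) :
    (∃ P : Set (Fin n → ℝ), IsIntegralGPolyhedron G P ∧ IsPointedSet (recCone P) ∧
        ⋃₀ 𝒞 ⊆ P ∧ recCone P ∈ Δ) ↔
      ∃ σ ∈ Δ, ∀ P' ∈ 𝒞, IsFaceOfCone σ (recCone P') :=
  exists_enclosing_polyhedron_iff_general G hGdiv 𝒞 h𝒞fin h𝒞 Δ hΔ hΔint hcpt
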